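/- Let f(x) = (1/2)⟨x, Qx⟩ + ⟨q, x⟩ with Q symmetric positive semidefinite with smallest eigenvalue m ≥ 0 and largest eigenvalue L > 0, let g : ℝⁿ → ℝ be convex and lower semicontinuous, and let μ ∈ (0, 1/L). Set m̃ = min{ (1 − μm)m/(1 + μm)², (1 − μL)L/(1 + μL)² }. Then the Douglas–Rachford envelope D_μ(z) = F_μ(prox_{μf}(z)) is m̃-strongly convex, i.e., D_μ − (m̃/2)‖·‖² is convex. -/

import Mathlib

/-!
Write `x = prox_{μf}(z)`, so that `z = x + μ(Qx + q)` and `z ↦ x` is affine (the map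
`x ↦ x + μ(Qx + q)` is injective since `Q ⪰ 0`). In terms of `x`,
`D_μ(z) - (m̃/2)‖z‖² = M_{μg}(x - μ(Qx + q)) + [f(x) - (μ/2)‖Qx + q‖² - (m̃/2)‖x + μ(Qx + q)‖²]`.
The Moreau envelope of a convex function is convex (an infimum of a jointly convex function), so
the first term is convex. The bracket is a quadratic with Hessian `Q - μQ² - m̃(I + μQ)²`, which is
positive semidefinite: `λ ↦ λ(1 - μλ) - m̃(1 + μλ)²` is concave and, by the choice of `m̃`,
nonnegative at `λ = m` and `λ = L`, hence on the spectrum of `Q`. In operator form this rests on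
`‖Qd‖² ≤ (m + L)⟪d, Qd⟫ - mL‖d‖²`, i.e. `(Q - m)(L - Q) ⪰ 0`.
-/

open Set RealInnerProductSpace

section Convexity

variable {E F : Type*} [AddCommGroup E] [Module ℝ E] [AddCommGroup F] [Module ℝ F]

theorem ConvexOn.comp_of_map_combination {φ : F → ℝ} (hφ : ConvexOn ℝ univ φ) {p : E → F}
    (hp : ∀ (x y : E) (a b : ℝ), a + b = 1 → p (a • x + b • y) = a • p x + b • p y) :
    ConvexOn ℝ univ (φ ∘ p) :=
  ⟨convex_univ, fun x _ y _ a b ha hb hab => by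
    simpa only [Function.comp_apply, hp x y a b hab] using
      hφ.2 (mem_univ (p x)) (mem_univ (p y)) ha hb hab⟩

theorem convexOn_univ_of_quadratic_expansion {h : E → ℝ} (B : E → E → ℝ) (C : E → ℝ)
    (hexp : ∀ x d (t : ℝ), h (x + t • d) = h x + t * B x d + t ^ 2 * C d)
    (hC : ∀ d, 0 ≤ C d) : ConvexOn ℝ univ h := by
  refine ⟨convex_univ, fun x _ y _ a b ha hb hab => ?_⟩
  obtain rfl : b = 1 - a := by linarith
  have hx : a • x + (1 - a) • y = y + a • (x - y) := by module
  have hy : x = y + (1 : ℝ) • (x - y) := by module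
  rw [hx, hexp, smul_eq_mul, smul_eq_mul, hy, hexp, ← hy]
  nlinarith [mul_nonneg (mul_nonneg ha hb) (hC (x - y))]

theorem ConvexOn.iInf_snd [Nonempty F] {Φ : E × F → ℝ} (hΦ : ConvexOn ℝ univ Φ)
    (hbdd : ∀ x, BddBelow (range fun u => Φ (x, u))) :
    ConvexOn ℝ univ fun x => ⨅ u, Φ (x, u) := by
  refine ⟨convex_univ, fun x₁ _ x₂ _ a b ha hb hab => ?_⟩
  simp only [smul_eq_mul, Real.mul_iInf_of_nonneg ha, Real.mul_iInf_of_nonneg hb]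
  refine le_ciInf_add_ciInf fun u₁ u₂ => ciInf_le_of_le (hbdd _) (a • u₁ + b • u₂) ?_
  simpa using hΦ.2 (mem_univ (x₁, u₁)) (mem_univ (x₂, u₂)) ha hb hab

end Convexity

section InnerProductSpace

variable {E : Type*} [NormedAddCommGroup E] [InnerProductSpace ℝ E]

theorem ConvexOn.exists_continuousLinearMap_add_const_le {g : E → ℝ} (hg : ConvexOn ℝ univ g)
    (hlsc : LowerSemicontinuous g) : ∃ (l : E →L[ℝ] ℝ) (c : ℝ), ∀ u, l u + c ≤ g u := by
  obtain ⟨l, c, hle, -⟩ := hg.exists_affine_le_of_lt (𝕜 := ℝ) (mem_univ 0) (sub_one_lt (g 0))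
    isClosed_univ (hlsc.lowerSemicontinuousOn univ)
  exact ⟨l, c, fun u => by simpa using hle ⟨u, mem_univ u⟩⟩

theorem bddBelow_range_add_norm_sub_sq_div {g : E → ℝ} (hg : ConvexOn ℝ univ g)
    (hlsc : LowerSemicontinuous g) {μ : ℝ} (hμ : 0 < μ) (v : E) :
    BddBelow (range fun u => g u + ‖u - v‖ ^ 2 / (2 * μ)) := by
  obtain ⟨l, c, hlc⟩ := hg.exists_continuousLinearMap_add_const_le hlsc
  refine ⟨l v + c - μ * ‖l‖ ^ 2 / 2, ?_⟩
  rintro _ ⟨u, rfl⟩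
  have hl : -(‖l‖ * ‖u - v‖) ≤ l u - l v := by
    rw [← map_sub]
    exact neg_le_of_abs_le (l.le_opNorm (u - v))
  have hamgm : ‖l‖ * ‖u - v‖ ≤ ‖u - v‖ ^ 2 / (2 * μ) + μ * ‖l‖ ^ 2 / 2 := by
    rw [div_add_div _ _ (by positivity) two_ne_zero, le_div_iff₀ (by positivity)]
    nlinarith [sq_nonneg (‖u - v‖ - μ * ‖l‖)]
  linarith [hlc u]

noncomputable def moreauEnvelope (μ : ℝ) (g : E → ℝ) (v : E) : ℝ :=
  ⨅ u, g u + ‖u - v‖ ^ 2 / (2 * μ)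

theorem ConvexOn.moreauEnvelope {g : E → ℝ} (hg : ConvexOn ℝ univ g)
    (hlsc : LowerSemicontinuous g) {μ : ℝ} (hμ : 0 < μ) :
    ConvexOn ℝ univ (moreauEnvelope μ g) := by
  have hsq : ConvexOn ℝ univ fun x : E => ‖x‖ ^ 2 :=
    convexOn_univ_norm.pow (fun _ _ => norm_nonneg _) 2
  have hΦ : ConvexOn ℝ univ fun p : E × E => g p.2 + ‖p.2 - p.1‖ ^ 2 / (2 * μ) := by
    refine (hg.comp_linearMap (LinearMap.snd ℝ E E)).add ?_
    simpa [div_eq_inv_mul] using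
      (hsq.comp_linearMap (LinearMap.snd ℝ E E - LinearMap.fst ℝ E E)).smul
        (inv_nonneg.2 (by positivity : (0 : ℝ) ≤ 2 * μ))
  exact hΦ.iInf_snd fun v => bddBelow_range_add_norm_sub_sq_div hg hlsc hμ v

theorem ContinuousLinearMap.IsPositive.inner_apply_sq_le {T : E →L[ℝ] E} (hT : T.IsPositive)
    (x y : E) : ⟪T x, y⟫ ^ 2 ≤ ⟪T x, x⟫ * ⟪T y, y⟫ := by
  have h := discrim_le_zero (K := ℝ) (a := ⟪T y, y⟫) (b := 2 * ⟪T x, y⟫) (c := ⟪T x, x⟫)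
    fun t => by
      convert hT.inner_nonneg_left (x + t • y) using 1
      simp only [map_add, map_smul, inner_add_left, inner_add_right, real_inner_smul_left,
        real_inner_smul_right, hT.inner_left_eq_inner_right y x, real_inner_comm (T x) y]
      ring
  rw [discrim] at h
  linarith

theorem ContinuousLinearMap.IsPositive.norm_apply_sq_le {T : E →L[ℝ] E} (hT : T.IsPositive)
    {c : ℝ} (hc : ∀ x, ⟪T x, x⟫ ≤ c * ‖x‖ ^ 2) (x : E) : ‖T x‖ ^ 2 ≤ c * ⟪T x, x⟫ := by
  rcases eq_or_ne (T x) 0 with h0 | hne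
  · simp [h0]
  have hpos : 0 < ‖T x‖ ^ 2 := by positivity
  refine le_of_mul_le_mul_right ?_ hpos
  calc ‖T x‖ ^ 2 * ‖T x‖ ^ 2 = ⟪T x, T x⟫ ^ 2 := by rw [real_inner_self_eq_norm_sq]; ring
    _ ≤ ⟪T x, x⟫ * ⟪T (T x), T x⟫ := hT.inner_apply_sq_le x (T x)
    _ ≤ ⟪T x, x⟫ * (c * ‖T x‖ ^ 2) := mul_le_mul_of_nonneg_left (hc (T x)) (hT.inner_nonneg_left x)
    _ = c * ⟪T x, x⟫ * ‖T x‖ ^ 2 := by ring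

theorem norm_apply_sq_le_of_rayleigh_bounds {Q : E →L[ℝ] E} (hQ : Q.IsSymmetric) {m L : ℝ}
    (hQm : ∀ x, m * ‖x‖ ^ 2 ≤ ⟪x, Q x⟫) (hQL : ∀ x, ⟪x, Q x⟫ ≤ L * ‖x‖ ^ 2) (x : E) :
    ‖Q x‖ ^ 2 ≤ (m + L) * ⟪x, Q x⟫ - m * L * ‖x‖ ^ 2 := by
  set T : E →L[ℝ] E := Q - m • ContinuousLinearMap.id ℝ E
  have hTx : ∀ y, ⟪T y, y⟫ = ⟪y, Q y⟫ - m * ‖y‖ ^ 2 := fun y => by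
    simp [T, inner_sub_left, real_inner_smul_left, real_inner_comm y (Q y)]
  have hT : T.IsPositive := by
    refine (ContinuousLinearMap.isPositive_iff T).2
      ⟨hQ.sub (LinearMap.IsSymmetric.id.smul (conj_trivial m)), fun y => ?_⟩
    rw [hTx]
    linarith [hQm y]
  have h := hT.norm_apply_sq_le (c := L - m) (fun y => by rw [hTx]; linarith [hQL y]) x
  rw [hTx] at h
  have hexp : ‖T x‖ ^ 2 = ‖Q x‖ ^ 2 - 2 * m * ⟪x, Q x⟫ + m ^ 2 * ‖x‖ ^ 2 := by
    simp only [T, sub_apply, smul_apply, ContinuousLinearMap.id_apply, norm_sub_sq_real,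
      norm_smul, real_inner_smul_right, Real.norm_eq_abs, mul_pow, sq_abs, real_inner_comm x (Q x)]
    ring
  linarith

theorem mul_norm_add_smul_apply_sq_le {Q : E →L[ℝ] E} (hQ : Q.IsSymmetric) {m L μ mt : ℝ}
    (hQm : ∀ x, m * ‖x‖ ^ 2 ≤ ⟪x, Q x⟫) (hQL : ∀ x, ⟪x, Q x⟫ ≤ L * ‖x‖ ^ 2)
    (hμ : 0 ≤ μ) (hmt : 0 ≤ mt) (hem : mt * (1 + μ * m) ^ 2 ≤ (1 - μ * m) * m)
    (heL : mt * (1 + μ * L) ^ 2 ≤ (1 - μ * L) * L) (d : E) :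
    mt * ‖d + μ • Q d‖ ^ 2 ≤ ⟪d, Q d⟫ - μ * ‖Q d‖ ^ 2 := by
  have hγ := norm_apply_sq_le_of_rayleigh_bounds hQ hQm hQL d
  have hexp : ‖d + μ • Q d‖ ^ 2 = ‖d‖ ^ 2 + 2 * μ * ⟪d, Q d⟫ + μ ^ 2 * ‖Q d‖ ^ 2 := by
    rw [norm_add_sq_real, norm_smul, real_inner_smul_right, Real.norm_eq_abs, mul_pow, sq_abs]
    ring
  set c := μ + mt * μ ^ 2
  have hc : 0 ≤ c := by positivity
  -- bounding `‖Q d‖²` by `hγ` leaves a linear form in `(‖d‖², ⟪d, Q d⟫)`, nonnegative at both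
  -- extreme points `⟪d, Q d⟫ = m‖d‖²` and `⟪d, Q d⟫ = L‖d‖²` by `hem` and `heL`
  have hlin : 0 ≤ (c * m * L - mt) * ‖d‖ ^ 2 + (1 - 2 * mt * μ - c * (m + L)) * ⟪d, Q d⟫ := by
    rcases le_total 0 (1 - 2 * mt * μ - c * (m + L)) with hb | hb
    · nlinarith [mul_le_mul_of_nonneg_left (hQm d) hb,
        mul_nonneg (sq_nonneg ‖d‖) (sub_nonneg.2 hem)]
    · nlinarith [mul_le_mul_of_nonpos_left (hQL d) hb,
        mul_nonneg (sq_nonneg ‖d‖) (sub_nonneg.2 heL)]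
  rw [hexp]
  nlinarith [mul_le_mul_of_nonneg_left hγ hc]

noncomputable def quadraticFn (Q : E →L[ℝ] E) (q x : E) : ℝ := 1 / 2 * ⟪x, Q x⟫ + ⟪q, x⟫

theorem hasFDerivAt_quadraticFn {Q : E →L[ℝ] E} (hQ : Q.IsSymmetric) (q x : E) :
    HasFDerivAt (quadraticFn Q q) (innerSL ℝ (Q x + q)) x := by
  have h := ((hQ.hasStrictFDerivAt_reApplyInnerSelf x).hasFDerivAt.const_mul (1 / 2 : ℝ)).add
    (innerSL ℝ q).hasFDerivAt
  have hfun : quadraticFn Q q = (fun y => 1 / 2 * Q.reApplyInnerSelf y) + innerSL ℝ q := by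
    funext y
    simp [quadraticFn, ContinuousLinearMap.reApplyInnerSelf_apply, real_inner_comm y (Q y)]
  rw [hfun]
  refine h.congr_fderiv ?_
  ext y
  simp

theorem gradient_quadraticFn [CompleteSpace E] {Q : E →L[ℝ] E} (hQ : Q.IsSymmetric) (q x : E) :
    gradient (quadraticFn Q q) x = Q x + q :=
  (hasGradientAt_iff_hasFDerivAt.2 (hasFDerivAt_quadraticFn hQ q x)).gradient

theorem add_smul_eq_of_isMinOn {Q : E →L[ℝ] E} (hQ : Q.IsSymmetric) {q v x : E} {μ : ℝ}
    (hμ : 0 < μ) (hmin : IsMinOn (fun z => quadraticFn Q q z + ‖z - v‖ ^ 2 / (2 * μ)) univ x) :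
    x + μ • (Q x + q) = v := by
  have hsq : HasFDerivAt (fun z => ‖z - v‖ ^ 2 / (2 * μ)) (μ⁻¹ • innerSL ℝ (x - v)) x := by
    have h := ((hasFDerivAt_id x).sub_const v).norm_sq.mul_const (2 * μ)⁻¹
    simp only [div_eq_mul_inv]
    refine h.congr_fderiv ?_
    ext y
    simp only [mul_inv_rev, id_eq, map_sub, ContinuousLinearMap.comp_id, smul_apply, sub_apply,
      coe_innerSL_apply, nsmul_eq_mul, Nat.cast_ofNat, smul_eq_mul]
    ring
  set w := μ • (Q x + q) + (x - v)
  have h0 : ⟪Q x + q, w⟫ + μ⁻¹ * ⟪x - v, w⟫ = 0 := by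
    simpa only [add_apply, smul_apply, innerSL_apply_apply, smul_eq_mul, zero_apply] using
      DFunLike.congr_fun ((hmin.isLocalMin Filter.univ_mem).hasFDerivAt_eq_zero
        ((hasFDerivAt_quadraticFn hQ q x).add hsq)) w
  have hw0 : w = 0 := by
    refine inner_self_eq_zero (𝕜 := ℝ).1 ?_
    calc ⟪w, w⟫ = ⟪μ • (Q x + q) + (x - v), w⟫ := rfl
      _ = μ * (⟪Q x + q, w⟫ + μ⁻¹ * ⟪x - v, w⟫) := by
        rw [inner_add_left, real_inner_smul_left, mul_add, ← mul_assoc, mul_inv_cancel₀ hμ.ne',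
          one_mul]
      _ = 0 := by rw [h0, mul_zero]
  linear_combination (norm := module) hw0

theorem convexOn_quadraticFn_sub_norm_sq {Q : E →L[ℝ] E} (hQ : Q.IsSymmetric) {m L μ mt : ℝ}
    (hQm : ∀ x, m * ‖x‖ ^ 2 ≤ ⟪x, Q x⟫) (hQL : ∀ x, ⟪x, Q x⟫ ≤ L * ‖x‖ ^ 2)
    (hμ : 0 ≤ μ) (hmt : 0 ≤ mt) (hem : mt * (1 + μ * m) ^ 2 ≤ (1 - μ * m) * m)
    (heL : mt * (1 + μ * L) ^ 2 ≤ (1 - μ * L) * L) (q : E) :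
    ConvexOn ℝ univ fun x =>
      quadraticFn Q q x - μ / 2 * ‖Q x + q‖ ^ 2 - mt / 2 * ‖x + μ • (Q x + q)‖ ^ 2 := by
  refine convexOn_univ_of_quadratic_expansion
    (fun x d => ⟪Q x + q, d⟫ - μ * ⟪Q x + q, Q d⟫ - mt * ⟪x + μ • (Q x + q), d + μ • Q d⟫)
    (fun d => 1 / 2 * ⟪d, Q d⟫ - μ / 2 * ‖Q d‖ ^ 2 - mt / 2 * ‖d + μ • Q d‖ ^ 2)
    (fun x d t => ?_) (fun d => ?_)
  · have h1 : Q (x + t • d) + q = (Q x + q) + t • Q d := by rw [map_add, map_smul]; abel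
    have h2 : x + t • d + μ • (Q (x + t • d) + q) = (x + μ • (Q x + q)) + t • (d + μ • Q d) := by
      rw [h1]; module
    have h3 : ⟪x, Q d⟫ = ⟪d, Q x⟫ := by rw [real_inner_comm (Q x) d]; exact (hQ x d).symm
    rw [h2, h1, quadraticFn, quadraticFn, map_add, map_smul]
    simp only [norm_add_sq_real, norm_smul, real_inner_smul_left, real_inner_smul_right,
      inner_add_left, inner_add_right, Real.norm_eq_abs, mul_pow, sq_abs, h3,
      real_inner_comm d (Q x), real_inner_comm d q]
    ring
  · linarith [mul_norm_add_smul_apply_sq_le hQ hQm hQL hμ hmt hem heL d]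

theorem map_combination_of_add_smul_eq {Q : E →L[ℝ] E} (hQ : ∀ x, 0 ≤ ⟪x, Q x⟫) {μ : ℝ}
    (hμ : 0 ≤ μ) {q : E} {p : E → E} (hp : ∀ z, p z + μ • (Q (p z) + q) = z) (z₁ z₂ : E)
    {a b : ℝ} (hab : a + b = 1) : p (a • z₁ + b • z₂) = a • p z₁ + b • p z₂ := by
  set d := p (a • z₁ + b • z₂) - (a • p z₁ + b • p z₂)
  have hd : d + μ • Q d = 0 := by
    have h := hp (a • z₁ + b • z₂)
    have h₁ := hp z₁
    have h₂ := hp z₂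
    obtain rfl : b = 1 - a := by linarith
    simp only [d, map_sub, map_add, map_smul]
    linear_combination (norm := module) h - a • h₁ - (1 - a) • h₂
  have hdd : ‖d‖ ^ 2 + μ * ⟪d, Q d⟫ = 0 := by
    rw [← real_inner_self_eq_norm_sq, ← real_inner_smul_right, ← inner_add_right, hd,
      inner_zero_right]
  have : ‖d‖ = 0 := by nlinarith [mul_nonneg hμ (hQ d), norm_nonneg d]
  exact sub_eq_zero.1 (norm_eq_zero.1 this)

end InnerProductSpace

theorem DR_envelope_strongly_convex_quadratic_general {n : ℕ}
    (Q : EuclideanSpace ℝ (Fin n) →L[ℝ] EuclideanSpace ℝ (Fin n))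
    (q : EuclideanSpace ℝ (Fin n)) (g : EuclideanSpace ℝ (Fin n) → ℝ)
    (m L μ mt : ℝ)
    (hQsym : ∀ x y : EuclideanSpace ℝ (Fin n), ⟪Q x, y⟫ = ⟪x, Q y⟫)
    (hm : 0 ≤ m) (hL : 0 < L)
    (hQm : ∀ x : EuclideanSpace ℝ (Fin n), m * ‖x‖ ^ 2 ≤ ⟪x, Q x⟫)
    (hQmmin : ∃ x : EuclideanSpace ℝ (Fin n), x ≠ 0 ∧ ⟪x, Q x⟫ = m * ‖x‖ ^ 2)
    (hQL : ∀ x : EuclideanSpace ℝ (Fin n), ⟪x, Q x⟫ ≤ L * ‖x‖ ^ 2)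
    (f : EuclideanSpace ℝ (Fin n) → ℝ)
    (hf : ∀ x, f x = (1 / 2) * ⟪x, Q x⟫ + ⟪q, x⟫)
    (hgconv : ConvexOn ℝ univ g) (hglsc : LowerSemicontinuous g)
    (hμ : μ ∈ Ioo 0 (1 / L))
    (hmt : mt = min ((1 - μ * m) * m / (1 + μ * m) ^ 2)
                    ((1 - μ * L) * L / (1 + μ * L) ^ 2))
    (M : EuclideanSpace ℝ (Fin n) → ℝ)
    (hM : ∀ v, M v = ⨅ z : EuclideanSpace ℝ (Fin n), (g z + ‖z - v‖ ^ 2 / (2 * μ)))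
    (Fμ : EuclideanSpace ℝ (Fin n) → ℝ)
    (hFμ : ∀ x, Fμ x = f x + M (x - μ • gradient f x) - μ / 2 * ‖gradient f x‖ ^ 2)
    (proxf : EuclideanSpace ℝ (Fin n) → EuclideanSpace ℝ (Fin n))
    (hproxf : ∀ v, IsMinOn (fun z => f z + ‖z - v‖ ^ 2 / (2 * μ)) univ (proxf v))
    (Dμ : EuclideanSpace ℝ (Fin n) → ℝ)
    (hDμ : ∀ z, Dμ z = Fμ (proxf z)) :
    ConvexOn ℝ univ (fun z => Dμ z - mt / 2 * ‖z‖ ^ 2) := by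
  obtain ⟨hμ, hμL⟩ := hμ
  rw [lt_div_iff₀ hL, mul_comm] at hμL
  have hmL : m ≤ L := by
    obtain ⟨x, hx, hxm⟩ := hQmmin
    exact le_of_mul_le_mul_right (hxm ▸ hQL x) (by positivity)
  have hmt_le_m : mt * (1 + μ * m) ^ 2 ≤ (1 - μ * m) * m :=
    (le_div_iff₀ (by positivity)).1 (hmt ▸ min_le_left _ _)
  have hmt_le_L : mt * (1 + μ * L) ^ 2 ≤ (1 - μ * L) * L :=
    (le_div_iff₀ (by positivity)).1 (hmt ▸ min_le_right _ _)
  have hmt0 : 0 ≤ mt := hmt ▸ le_min (div_nonneg (mul_nonneg (by nlinarith) hm) (sq_nonneg _))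
    (div_nonneg (mul_nonneg (by linarith) hL.le) (sq_nonneg _))
  obtain rfl : f = quadraticFn Q q := funext hf
  obtain rfl : M = moreauEnvelope μ g := funext hM
  have hprox (z) : proxf z + μ • (Q (proxf z) + q) = z := add_smul_eq_of_isMinOn hQsym hμ (hproxf z)
  have hforward : ConvexOn ℝ univ fun x => moreauEnvelope μ g (x - μ • (Q x + q)) :=
    (hgconv.moreauEnvelope hglsc hμ).comp_of_map_combination fun x y a b hab => by
      obtain rfl : b = 1 - a := by linarith
      simp only [map_add, map_smul]
      module
  have hsmooth := convexOn_quadraticFn_sub_norm_sq hQsym hQm hQL hμ.le hmt0 hmt_le_m hmt_le_L q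
  have hQpos (x) : 0 ≤ ⟪x, Q x⟫ := (mul_nonneg hm (sq_nonneg _)).trans (hQm x)
  refine ((hforward.add hsmooth).comp_of_map_combination
    fun z₁ z₂ a b hab => map_combination_of_add_smul_eq hQpos hμ.le hprox z₁ z₂ hab).congr
    fun z _ => ?_
  simp only [hDμ, hFμ, gradient_quadraticFn hQsym, Function.comp_apply, Pi.add_apply]
  rw [← congrArg norm (hprox z)]
  ring

/-- Lemma 2, Douglas–Rachford strong convexity: for a convex
quadratic `f`, the Douglas–Rachford envelope is
`m̃ = min{(1 - μm)m/(1 + μm)², (1 - μL)L/(1 + μL)²}`-strongly convex. -/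
theorem DR_envelope_strongly_convex_quadratic {n : ℕ}
    (Q : EuclideanSpace ℝ (Fin n) →L[ℝ] EuclideanSpace ℝ (Fin n))
    (q : EuclideanSpace ℝ (Fin n)) (g : EuclideanSpace ℝ (Fin n) → ℝ)
    (m L μ mt : ℝ)
    (hQsym : ∀ x y : EuclideanSpace ℝ (Fin n), ⟪Q x, y⟫ = ⟪x, Q y⟫)
    (hm : 0 ≤ m) (hL : 0 < L)
    (hQm : ∀ x : EuclideanSpace ℝ (Fin n), m * ‖x‖ ^ 2 ≤ ⟪x, Q x⟫)
    (hQmmin : ∃ x : EuclideanSpace ℝ (Fin n), x ≠ 0 ∧ ⟪x, Q x⟫ = m * ‖x‖ ^ 2)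
    (hQL : ∀ x : EuclideanSpace ℝ (Fin n), ⟪x, Q x⟫ ≤ L * ‖x‖ ^ 2)
    (hQLmax : ∃ x : EuclideanSpace ℝ (Fin n), x ≠ 0 ∧ ⟪x, Q x⟫ = L * ‖x‖ ^ 2)
    (f : EuclideanSpace ℝ (Fin n) → ℝ)
    (hf : ∀ x, f x = (1 / 2) * ⟪x, Q x⟫ + ⟪q, x⟫)
    (hgconv : ConvexOn ℝ univ g) (hglsc : LowerSemicontinuous g)
    (hμ : μ ∈ Ioo 0 (1 / L))
    (hmt : mt = min ((1 - μ * m) * m / (1 + μ * m) ^ 2)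
                    ((1 - μ * L) * L / (1 + μ * L) ^ 2))
    (M : EuclideanSpace ℝ (Fin n) → ℝ)
    (hM : ∀ v, M v = ⨅ z : EuclideanSpace ℝ (Fin n), (g z + ‖z - v‖ ^ 2 / (2 * μ)))
    (Fμ : EuclideanSpace ℝ (Fin n) → ℝ)
    (hFμ : ∀ x, Fμ x = f x + M (x - μ • gradient f x) - μ / 2 * ‖gradient f x‖ ^ 2)
    (proxf : EuclideanSpace ℝ (Fin n) → EuclideanSpace ℝ (Fin n))
    (hproxf : ∀ v, IsMinOn (fun z => f z + ‖z - v‖ ^ 2 / (2 * μ)) univ (proxf v))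
    (Dμ : EuclideanSpace ℝ (Fin n) → ℝ)
    (hDμ : ∀ z, Dμ z = Fμ (proxf z)) :
    ConvexOn ℝ univ (fun z => Dμ z - mt / 2 * ‖z‖ ^ 2) :=
  DR_envelope_strongly_convex_quadratic_general Q q g m L μ mt hQsym hm hL hQm hQmmin hQL f hf
    hgconv hglsc hμ hmt M hM Fμ hFμ proxf hproxf Dμ hDμ
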